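/- Let (N,v) be a zero-normalized symmetric game with v(S) = f(|S|) and let (N,E) be a cycle-free graph. For every nonempty L ⊆ E such that the edge-induced subgraph Γ_L is connected, the Harsanyi dividend of L in the link game satisfies λ_L(w^v) = Σ_{k=0}^{l−d_L} (−1)^k C(l−d_L, k) f(l+1−k), where l = |L| and d_L is the number of cutedges of L (edges both of whose endpoints are cutvertices of Γ_L). -/

import Mathlib

open scoped Classical

noncomputable section

variable {V : Type*} [Fintype V] [DecidableEq V]

/-- The vertex set of the connected component of `i` in the graph with edge set `L`. -/
def comp (L : Finset (Sym2 V)) (i : V) : Finset V :=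
  Finset.univ.filter fun j =>
    (SimpleGraph.fromEdgeSet (↑L : Set (Sym2 V))).Reachable i j

/-- Nodes covered by the edge set `L` (the node set `N[L]`). -/
def covered (L : Finset (Sym2 V)) : Finset V :=
  Finset.univ.filter fun i => ∃ e ∈ L, i ∈ e

/-- The collection of (vertex sets of) connected components of the edge-induced
subgraph `Γ_L = (N[L], L)`. -/
def comps (L : Finset (Sym2 V)) : Finset (Finset V) :=
  (covered L).image (comp L)

/-- The link game `w^v` associated with the game `v` and an edge set. -/
def linkGame (v : Finset V → ℝ) (L : Finset (Sym2 V)) : ℝ :=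
  ∑ C ∈ comps L, v C

/-- Shapley value of player `e` in the game `w` with player set `E`. -/
def shapley {α : Type*} [DecidableEq α] (E : Finset α) (w : Finset α → ℝ) (e : α) : ℝ :=
  ∑ L ∈ (E.erase e).powerset,
    ((L.card.factorial : ℝ) * ((E.card - L.card - 1).factorial : ℝ) / (E.card.factorial : ℝ)) *
      (w (insert e L) - w L)

/-- Harsanyi dividend of coalition `L` in the game `w`. -/
def dividend {α : Type*} [DecidableEq α] (w : Finset α → ℝ) (L : Finset α) : ℝ :=
  ∑ T ∈ L.powerset, (-1 : ℝ) ^ (L.card - T.card) * w T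

/-- The position value of node `i` in the communication situation `(N, v, E)`. -/
def positionValue (v : Finset V → ℝ) (E : Finset (Sym2 V)) (i : V) : ℝ :=
  (1 / 2) * ∑ e ∈ E.filter (fun e => i ∈ e), shapley E (linkGame v) e

def Superadditive (v : Finset V → ℝ) : Prop :=
  ∀ S T : Finset V, Disjoint S T → v S + v T ≤ v (S ∪ T)

def ConvexGame (v : Finset V → ℝ) : Prop :=
  ∀ S T : Finset V, v S + v T ≤ v (S ∪ T) + v (S ∩ T)

def ZeroNormalized (v : Finset V → ℝ) : Prop :=
  v ∅ = 0 ∧ ∀ i : V, v {i} = 0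

def SymmetricGame (v : Finset V → ℝ) (f : ℕ → ℝ) : Prop :=
  ∀ S : Finset V, v S = f S.card

/-- An edge set without loops. -/
def SimpleEdges (E : Finset (Sym2 V)) : Prop := ∀ e ∈ E, ¬ e.IsDiag

/-- The edge-induced subgraph `Γ_L = (N[L], L)` is connected. -/
def EdgeConnected (L : Finset (Sym2 V)) : Prop :=
  ∀ i ∈ covered L, ∀ j ∈ covered L,
    (SimpleGraph.fromEdgeSet (↑L : Set (Sym2 V))).Reachable i j

/-- Component of `i` in the subgraph of `Γ_L` induced on the vertex set `S`. -/
def compIn (L : Finset (Sym2 V)) (S : Finset V) (i : V) : Finset V :=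
  S.filter fun j =>
    (SimpleGraph.fromEdgeSet
      (↑(L.filter fun e => ∀ x ∈ e, x ∈ S) : Set (Sym2 V))).Reachable i j

/-- Number of connected components of the subgraph of `Γ_L` induced on `S`. -/
def numCompsIn (L : Finset (Sym2 V)) (S : Finset V) : ℕ :=
  (S.image (compIn L S)).card

/-- A cutvertex of `Γ_L`: a vertex whose removal increases the number of components. -/
def IsCutvertex (L : Finset (Sym2 V)) (i : V) : Prop :=
  i ∈ covered L ∧ numCompsIn L (covered L) < numCompsIn L ((covered L).erase i)

/-- The set of cutedges of `L`: edges both of whose endpoints are cutvertices. -/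
def cutedges (L : Finset (Sym2 V)) : Finset (Sym2 V) :=
  L.filter fun e => ∀ x ∈ e, IsCutvertex L x

/-- The attachment game `v_a(S) = 2(|S| - 1)` (and `v_a(∅) = 0`). -/
def va : Finset V → ℝ := fun S => if S = ∅ then 0 else 2 * ((S.card : ℝ) - 1)

/-- The star on `V` with hub `c`: all (non-loop) edges incident to `c`. -/
def starEdges (c : V) : Finset (Sym2 V) :=
  Finset.univ.filter fun e => ¬ e.IsDiag ∧ c ∈ e

/-- The chain (path) on `Fin n`, with edges `{i, i+1}`. -/
def chainEdges (n : ℕ) : Finset (Sym2 (Fin n)) :=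
  Finset.univ.filter fun e => ∃ i j : Fin n, e = s(i, j) ∧ (j : ℕ) = (i : ℕ) + 1

/-- `F(s, r) = ∑_{k=0}^{r} (-1)^k C(r,k) f(s-k)` for `f : ℕ → ℝ`. -/
def Ffun (f : ℕ → ℝ) (s r : ℕ) : ℝ :=
  ∑ k ∈ Finset.range (r + 1), (-1 : ℝ) ^ k * (r.choose k : ℝ) * f (s - k)

/-- `F(s, r) = ∑_{k=0}^{r} (-1)^k C(r,k) f(s-k)` for `f : ℝ → ℝ`. -/
def FfunR (f : ℝ → ℝ) (s r : ℕ) : ℝ :=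
  ∑ k ∈ Finset.range (r + 1), (-1 : ℝ) ^ k * (r.choose k : ℝ) * f ((s : ℝ) - (k : ℝ))


section Aux
set_option linter.unusedSectionVars false

open SimpleGraph Finset

variable {V : Type*} [Fintype V] [DecidableEq V]

/-- abbreviation for the graph of an edge finset -/
abbrev Gr (L : Finset (Sym2 V)) : SimpleGraph V :=
  SimpleGraph.fromEdgeSet (↑L : Set (Sym2 V))

lemma mem_covered' {L : Finset (Sym2 V)} {i : V} : i ∈ covered L ↔ ∃ e ∈ L, i ∈ e := by
  simp [covered]

lemma covered_mono {L' L : Finset (Sym2 V)} (h : L' ⊆ L) : covered L' ⊆ covered L := by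
  intro i hi
  rw [mem_covered'] at hi ⊢
  obtain ⟨e, he, hie⟩ := hi
  exact ⟨e, h he, hie⟩

lemma gr_adj {L : Finset (Sym2 V)} {x y : V} :
    (Gr L).Adj x y ↔ s(x, y) ∈ L ∧ x ≠ y := by
  rw [SimpleGraph.fromEdgeSet_adj]
  simp

lemma edge_mem_of_mem_edges {L : Finset (Sym2 V)} {a b : V} {p : (Gr L).Walk a b} {e : Sym2 V}
    (he : e ∈ p.edges) : e ∈ L ∧ ¬e.IsDiag := by
  have h := p.edges_subset_edgeSet he
  rw [SimpleGraph.edgeSet_fromEdgeSet] at h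
  exact ⟨by exact_mod_cast h.1, h.2⟩

lemma mem_support_of_edge {G : SimpleGraph V} {a b x : V} {p : G.Walk a b} {e : Sym2 V}
    (he : e ∈ p.edges) (hx : x ∈ e) : x ∈ p.support := by
  obtain ⟨y, rfl⟩ := Sym2.mem_iff_exists.mp hx
  exact p.fst_mem_support_of_mem_edges he

lemma support_cases {L : Finset (Sym2 V)} {a b : V} (p : (Gr L).Walk a b) :
    ∀ x ∈ p.support, x = a ∨ x ∈ covered L := by
  induction p with
  | nil => intro x hx; simp at hx; exact Or.inl hx
  | @cons a c b h q ih =>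
    intro x hx
    rw [SimpleGraph.Walk.support_cons, List.mem_cons] at hx
    rcases hx with rfl | hx
    · exact Or.inl rfl
    · rcases ih x hx with rfl | hx2
      · exact Or.inr (mem_covered'.mpr ⟨s(a, x), (gr_adj.mp h).1, by simp⟩)
      · exact Or.inr hx2

lemma covered_of_edge {L : Finset (Sym2 V)} {e : Sym2 V} {x : V} (he : e ∈ L) (hx : x ∈ e) :
    x ∈ covered L := mem_covered'.mpr ⟨e, he, hx⟩

lemma exists_mem_sym2 (e : Sym2 V) : ∃ x, x ∈ e := by
  induction e using Sym2.ind with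
  | _ a b => exact ⟨a, by simp⟩

lemma covered_nonempty {P : Finset (Sym2 V)} (h : P.Nonempty) : (covered P).Nonempty := by
  obtain ⟨e, he⟩ := h
  obtain ⟨x, hx⟩ := exists_mem_sym2 e
  exact ⟨x, covered_of_edge he hx⟩

lemma reachable_mono {L' L : Finset (Sym2 V)} (hsub : L' ⊆ L) {i j : V}
    (h : (Gr L').Reachable i j) : (Gr L).Reachable i j :=
  h.mono (SimpleGraph.fromEdgeSet_mono (by exact_mod_cast hsub))

lemma acyclic_sub {E L : Finset (Sym2 V)} (hsub : L ⊆ E) (hacyc : (Gr E).IsAcyclic) :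
    (Gr L).IsAcyclic := by
  intro x c hc
  refine hacyc (c.transfer (Gr E) ?_) (hc.transfer _)
  intro e he
  have h := edge_mem_of_mem_edges he
  rw [SimpleGraph.edgeSet_fromEdgeSet]
  exact ⟨by exact_mod_cast hsub h.1, h.2⟩

lemma two_edges_at_internal {G : SimpleGraph V} {a c : V} (p : G.Walk a c) (hp : p.IsPath)
    {x : V} (hx : x ∈ p.support) (hxa : x ≠ a) (hxc : x ≠ c) :
    ∃ e₁ ∈ p.edges, ∃ e₂ ∈ p.edges, e₁ ≠ e₂ ∧ x ∈ e₁ ∧ x ∈ e₂ := by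
  induction p with
  | nil => simp at hx; exact absurd hx hxa
  | @cons a d c h q ih =>
    rw [SimpleGraph.Walk.support_cons, List.mem_cons] at hx
    rcases hx with rfl | hx
    · exact absurd rfl hxa
    · have hq : q.IsPath := hp.of_cons
      by_cases hxd : x = d
      · subst hxd
        cases q with
        | nil => exact absurd rfl hxc
        | @cons d y c h2 q2 =>
          refine ⟨s(a, x), by simp, s(x, y), by simp, ?_, by simp, by simp⟩
          intro heq
          rw [Sym2.eq_iff] at heq
          rcases heq with ⟨h1, _⟩ | ⟨rfl, -⟩
          · exact h.ne h1
          · rw [SimpleGraph.Walk.cons_isPath_iff] at hp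
            apply hp.2
            rw [SimpleGraph.Walk.support_cons, List.mem_cons]
            exact Or.inr (SimpleGraph.Walk.start_mem_support q2)
      · obtain ⟨e₁, h1, e₂, h2, hne, hx1, hx2⟩ := ih hq hx hxd hxc
        exact ⟨e₁, by simp [h1], e₂, by simp [h2], hne, hx1, hx2⟩

lemma edge_at_start_unique {G : SimpleGraph V} {b a : V} {p : G.Walk b a} (hp : p.IsPath)
    {e₁ e₂ : Sym2 V} (h1 : e₁ ∈ p.edges) (h2 : e₂ ∈ p.edges) (hb1 : b ∈ e₁) (hb2 : b ∈ e₂) :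
    e₁ = e₂ := by
  cases p with
  | nil => simp at h1
  | @cons b c a h q =>
    have key : ∀ e ∈ (SimpleGraph.Walk.cons h q).edges, b ∈ e → e = s(b, c) := by
      intro e he hbe
      rw [SimpleGraph.Walk.edges_cons, List.mem_cons] at he
      rcases he with rfl | he
      · rfl
      · exfalso
        rw [SimpleGraph.Walk.cons_isPath_iff] at hp
        exact hp.2 (mem_support_of_edge he hbe)
    rw [key e₁ h1 hb1, key e₂ h2 hb2]

lemma isPath_concat {G : SimpleGraph V} {a b c : V} {p : G.Walk a b} (hp : p.IsPath)
    (h : G.Adj b c) (hc : c ∉ p.support) : (p.concat h).IsPath := by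
  rw [SimpleGraph.Walk.isPath_def, SimpleGraph.Walk.support_concat]
  rw [List.nodup_append]
  refine ⟨hp.support_nodup, List.nodup_singleton c, ?_⟩
  intro x hx y hy hxy
  rw [List.mem_singleton] at hy
  subst hy
  subst hxy
  exact hc hx

end Aux
section Aux2
set_option linter.unusedSectionVars false
set_option maxHeartbeats 1000000

open SimpleGraph Finset

variable {V : Type*} [Fintype V] [DecidableEq V]

lemma exists_leaf {E P : Finset (Sym2 V)} (hE : SimpleEdges E) (hacyc : (Gr E).IsAcyclic)
    (hP : P ⊆ E) (hne : P.Nonempty) :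
    ∃ (b : V) (e : Sym2 V), e ∈ P ∧ b ∈ e ∧ ∀ e' ∈ P, b ∈ e' → e' = e := by
  classical
  have hPacyc : (Gr P).IsAcyclic := acyclic_sub hP hacyc
  have pu := SimpleGraph.isAcyclic_iff_path_unique.mp hPacyc
  obtain ⟨a, ha⟩ := covered_nonempty hne
  set N := Fintype.card V with hN
  set Pred : ℕ → Prop := fun n => ∃ (b : V) (p : (Gr P).Walk a b), p.IsPath ∧ p.length = n
    with hPred
  have hP0 : Pred 0 := ⟨a, SimpleGraph.Walk.nil, SimpleGraph.Walk.IsPath.nil, rfl⟩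
  set n := Nat.findGreatest Pred N with hn
  have hspec : Pred n := Nat.findGreatest_spec (Nat.zero_le N) hP0
  have hgreat : ∀ m, n < m → m ≤ N → ¬Pred m := fun m h1 h2 => Nat.findGreatest_is_greatest h1 h2
  obtain ⟨b, p, hp, hplen⟩ := hspec
  -- n ≥ 1
  obtain ⟨ea, heaP, haea⟩ := mem_covered'.mp ha
  obtain ⟨y, hy⟩ := Sym2.mem_iff_exists.mp haea
  have hay : a ≠ y := by
    intro h
    exact hE ea (hP heaP) (by rw [hy, ← h]; exact Sym2.mk_isDiag_iff.mpr rfl)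
  have hNpos : 1 ≤ N := by
    rw [hN]; exact Fintype.card_pos_iff.mpr ⟨a⟩
  have hP1 : Pred 1 := by
    refine ⟨y, SimpleGraph.Walk.cons (gr_adj.mpr ⟨by rwa [← hy], hay⟩) SimpleGraph.Walk.nil,
      ?_, by simp⟩
    simp [SimpleGraph.Walk.isPath_def, hay]
  have hn1 : 1 ≤ n := by
    by_contra h
    push_neg at h
    exact hgreat 1 (by omega) hNpos hP1
  have hab : a ≠ b := by
    intro h
    subst h
    rw [SimpleGraph.Walk.isPath_iff_eq_nil] at hp
    rw [hp] at hplen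
    simp at hplen
    omega
  obtain ⟨c, hbc, q, hq⟩ := SimpleGraph.Walk.exists_eq_cons_of_ne (Ne.symm hab) p.reverse
  have hlast_mem : s(b, c) ∈ p.edges := by
    have : s(b, c) ∈ p.reverse.edges := by rw [hq]; simp
    rwa [SimpleGraph.Walk.edges_reverse, List.mem_reverse] at this
  refine ⟨b, s(b, c), (edge_mem_of_mem_edges hlast_mem).1, by simp, ?_⟩
  intro e' he'P hbe'
  obtain ⟨x, rfl⟩ := Sym2.mem_iff_exists.mp hbe'
  have hbx : b ≠ x := by
    intro h
    exact hE _ (hP he'P) (by rw [← h]; exact Sym2.mk_isDiag_iff.mpr rfl)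
  by_cases hxs : x ∈ p.support
  · -- x on the path: dropUntil + uniqueness gives s(x,b) ∈ p.edges
    have hq' : (p.dropUntil x hxs).IsPath := hp.dropUntil hxs
    have hadj : (Gr P).Adj x b := gr_adj.mpr ⟨by rwa [Sym2.eq_swap], Ne.symm hbx⟩
    have hsingle : (SimpleGraph.Walk.cons hadj SimpleGraph.Walk.nil).IsPath := by
      simp [SimpleGraph.Walk.isPath_def, Ne.symm hbx]
    have heq := pu ⟨p.dropUntil x hxs, hq'⟩
      ⟨SimpleGraph.Walk.cons hadj SimpleGraph.Walk.nil, hsingle⟩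
    have hxb_mem : s(x, b) ∈ p.edges := by
      have h2 : (p.dropUntil x hxs).edges = [s(x, b)] := by
        rw [show p.dropUntil x hxs = SimpleGraph.Walk.cons hadj SimpleGraph.Walk.nil from
          congrArg Subtype.val heq]
        simp
      exact SimpleGraph.Walk.edges_dropUntil_subset p hxs (by rw [h2]; simp)
    have hmem : s(b, x) ∈ p.reverse.edges := by
      rw [SimpleGraph.Walk.edges_reverse, List.mem_reverse, Sym2.eq_swap]
      exact hxb_mem
    exact edge_at_start_unique hp.reverse hmem (by rw [hq]; simp) (by simp) (by simp)
  · -- x not on the path: extend, contradicting maximality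
    exfalso
    have hadj : (Gr P).Adj b x := gr_adj.mpr ⟨he'P, hbx⟩
    have hpath : (p.concat hadj).IsPath := isPath_concat hp hadj hxs
    have hlen : (p.concat hadj).length = n + 1 := by
      rw [SimpleGraph.Walk.length_concat, hplen]
    have hle : n + 1 ≤ N := by
      have := hpath.length_lt
      omega
    exact hgreat (n + 1) (Nat.lt_succ_self n) hle ⟨x, p.concat hadj, hpath, hlen⟩

lemma card_covered {E : Finset (Sym2 V)} (hE : SimpleEdges E) (hacyc : (Gr E).IsAcyclic) :
    ∀ (P : Finset (Sym2 V)), P ⊆ E → P.Nonempty → EdgeConnected P →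
      (covered P).card = P.card + 1 := by
  classical
  suffices h : ∀ (n : ℕ) (P : Finset (Sym2 V)), P.card ≤ n → P ⊆ E → P.Nonempty →
      EdgeConnected P → (covered P).card = P.card + 1 by
    exact fun P h1 h2 h3 => h P.card P le_rfl h1 h2 h3
  intro n
  induction n with
  | zero => intro P hc hPE hne _; exact absurd (Finset.card_pos.mpr hne) (by omega)
  | succ n ihn =>
    intro P hc hPE hne hconn
    by_cases h1 : P.card = 1
    · obtain ⟨e, rfl⟩ := Finset.card_eq_one.mp h1
      revert hPE hne hconn
      induction e using Sym2.ind with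
      | _ a b =>
        intro hPE _ _
        have hab : a ≠ b := by
          intro h
          exact hE s(a, b) (hPE (Finset.mem_singleton_self _))
            (by rw [h]; exact Sym2.mk_isDiag_iff.mpr rfl)
        have : covered {s(a, b)} = {a, b} := by
          ext i
          simp [mem_covered', Sym2.mem_iff]
        rw [this, Finset.card_pair hab, Finset.card_singleton]
    · have hcard2 : 2 ≤ P.card := by
        have := Finset.card_pos.mpr hne
        omega
      obtain ⟨b, e0, he0P, hbe0, huniq⟩ := exists_leaf hE hacyc hPE hne
      obtain ⟨u, hu⟩ := Sym2.mem_iff_exists.mp hbe0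
      have hub : u ≠ b := by
        intro h
        exact hE e0 (hPE he0P) (by rw [hu, h]; exact Sym2.mk_isDiag_iff.mpr rfl)
      obtain ⟨e1, he1P, he1ne⟩ := Finset.exists_mem_ne hcard2 e0
      have hue0 : u ∈ e0 := by rw [hu]; simp
      -- u is incident to another edge of P
      have hu2 : ∃ e1 ∈ P, e1 ≠ e0 ∧ u ∈ e1 := by
        by_contra hcon
        push_neg at hcon
        have huuniq : ∀ e' ∈ P, u ∈ e' → e' = e0 := by
          intro e' hP' hu'
          by_contra h3
          exact hcon e' hP' h3 hu'
        obtain ⟨v1, hv1⟩ := exists_mem_sym2 e1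
        have hv1cov : v1 ∈ covered P := covered_of_edge he1P hv1
        have hbcov : b ∈ covered P := covered_of_edge he0P hbe0
        have hv1b : v1 ≠ b := by
          intro h
          exact he1ne (huniq e1 he1P (h ▸ hv1))
        obtain ⟨w⟩ := hconn v1 hv1cov b hbcov
        set p := w.toPath with hpdef
        obtain ⟨c, hbc, q, hq⟩ :=
          SimpleGraph.Walk.exists_eq_cons_of_ne (Ne.symm hv1b) p.val.reverse
        have hbcP : s(b, c) ∈ P := (gr_adj.mp hbc).1
        have hcu : c = u := by
          have h0 : s(b, c) = e0 := huniq s(b, c) hbcP (by simp)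
          have h2 : s(b, c) = s(b, u) := by rw [h0, hu]
          rcases Sym2.eq_iff.mp h2 with ⟨-, h⟩ | ⟨h, -⟩
          · exact h
          · exact absurd h.symm hub
        have hcsup : u ∈ p.val.support := by
          have h1 : c ∈ p.val.reverse.support := by
            rw [hq, SimpleGraph.Walk.support_cons]
            exact List.mem_cons_of_mem _ (SimpleGraph.Walk.start_mem_support q)
          rw [SimpleGraph.Walk.support_reverse, List.mem_reverse] at h1
          rwa [hcu] at h1
        have huv1 : u ≠ v1 := by
          intro h
          exact he1ne (huuniq e1 he1P (h ▸ hv1))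
        obtain ⟨f1, hf1, f2, hf2, hfne, huf1, huf2⟩ :=
          two_edges_at_internal p.val p.prop hcsup huv1 hub
        have := huuniq f1 (edge_mem_of_mem_edges hf1).1 huf1
        have := huuniq f2 (edge_mem_of_mem_edges hf2).1 huf2
        exact hfne (by grind)
      obtain ⟨e2, he2P, he2ne, hue2⟩ := hu2
      set P' := P.erase e0 with hP'def
      have hP'sub : P' ⊆ E := (Finset.erase_subset _ _).trans hPE
      have he2P' : e2 ∈ P' := Finset.mem_erase.mpr ⟨he2ne, he2P⟩
      have hP'ne : P'.Nonempty := ⟨e2, he2P'⟩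
      have hcov' : covered P' = (covered P).erase b := by
        ext i
        rw [mem_covered', Finset.mem_erase, mem_covered']
        constructor
        · rintro ⟨e, he, hie⟩
          obtain ⟨hne0, heP⟩ := Finset.mem_erase.mp he
          refine ⟨?_, ⟨e, heP, hie⟩⟩
          intro h
          exact hne0 (huniq e heP (h ▸ hie))
        · rintro ⟨hib, e, heP, hie⟩
          by_cases he0 : e = e0
          · subst he0
            have : i = u := by
              rw [hu] at hie
              rcases Sym2.mem_iff.mp hie with h | h
              · exact absurd h hib
              · exact h
            exact ⟨e2, he2P', this ▸ hue2⟩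
          · exact ⟨e, Finset.mem_erase.mpr ⟨he0, heP⟩, hie⟩
      have hconn' : EdgeConnected P' := by
        intro i hi j hj
        have hib : i ≠ b := by
          rw [hcov', Finset.mem_erase] at hi; exact hi.1
        have hjb : j ≠ b := by
          rw [hcov', Finset.mem_erase] at hj; exact hj.1
        have hi' : i ∈ covered P := covered_mono (Finset.erase_subset _ _) hi
        have hj' : j ∈ covered P := covered_mono (Finset.erase_subset _ _) hj
        obtain ⟨w⟩ := hconn i hi' j hj'
        set p := w.toPath with hpdef
        have hedges : ∀ e ∈ p.val.edges, e ∈ (Gr P').edgeSet := by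
          intro e he
          have h2 := edge_mem_of_mem_edges he
          have hne0 : e ≠ e0 := by
            intro h
            subst h
            have hbs : b ∈ p.val.support := mem_support_of_edge he hbe0
            obtain ⟨f1, hf1, f2, hf2, hfne, hbf1, hbf2⟩ :=
              two_edges_at_internal p.val p.prop hbs (Ne.symm hib) (Ne.symm hjb)
            have := huniq f1 (edge_mem_of_mem_edges hf1).1 hbf1
            have := huniq f2 (edge_mem_of_mem_edges hf2).1 hbf2
            exact hfne (by grind)
          rw [SimpleGraph.edgeSet_fromEdgeSet]
          exact ⟨by rw [Finset.mem_coe, hP'def, Finset.mem_erase]; exact ⟨hne0, h2.1⟩, h2.2⟩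
        exact ⟨p.val.transfer _ hedges⟩
      have ih := ihn P' (by rw [hP'def, Finset.card_erase_of_mem he0P]; omega)
        hP'sub hP'ne hconn'
      have hbP : b ∈ covered P := covered_of_edge he0P hbe0
      have hcovpos : 1 ≤ (covered P).card := Finset.card_pos.mpr ⟨b, hbP⟩
      rw [hcov', Finset.card_erase_of_mem hbP, hP'def, Finset.card_erase_of_mem he0P] at ih
      omega

end Aux2
section Aux3
set_option linter.unusedSectionVars false
set_option maxHeartbeats 1000000

open SimpleGraph Finset

variable {V : Type*} [Fintype V] [DecidableEq V]

lemma compIn_eq_self {L : Finset (Sym2 V)} {S : Finset V}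
    (h : ∀ i ∈ S, ∀ j ∈ S,
      (Gr (L.filter fun e => ∀ x ∈ e, x ∈ S)).Reachable i j) {i : V} (hi : i ∈ S) :
    compIn L S i = S :=
  Finset.filter_true_of_mem (fun j hj => h i hi j hj)

lemma numCompsIn_le_one {L : Finset (Sym2 V)} {S : Finset V}
    (h : ∀ i ∈ S, ∀ j ∈ S,
      (Gr (L.filter fun e => ∀ x ∈ e, x ∈ S)).Reachable i j) :
    numCompsIn L S ≤ 1 := by
  unfold numCompsIn
  rcases S.eq_empty_or_nonempty with rfl | hS
  · simp
  · obtain ⟨i0, hi0⟩ := hS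
    have himg : S.image (compIn L S) = {S} := by
      rw [Finset.eq_singleton_iff_unique_mem]
      constructor
      · exact Finset.mem_image.mpr ⟨i0, hi0, compIn_eq_self h hi0⟩
      · rintro C hC
        obtain ⟨i, hi, rfl⟩ := Finset.mem_image.mp hC
        exact compIn_eq_self h hi
    rw [himg, Finset.card_singleton]

lemma one_le_numCompsIn {L : Finset (Sym2 V)} {S : Finset V} (hS : S.Nonempty) :
    1 ≤ numCompsIn L S :=
  Finset.card_pos.mpr (hS.image _)

lemma filter_covered_eq (L : Finset (Sym2 V)) :
    L.filter (fun e => ∀ x ∈ e, x ∈ covered L) = L :=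
  Finset.filter_true_of_mem (fun e he x hx => covered_of_edge he hx)

lemma numCompsIn_covered_eq_one {L : Finset (Sym2 V)} (hne : L.Nonempty)
    (hconn : EdgeConnected L) : numCompsIn L (covered L) = 1 := by
  refine le_antisymm (numCompsIn_le_one ?_) (one_le_numCompsIn (covered_nonempty hne))
  intro i hi j hj
  rw [filter_covered_eq]
  exact hconn i hi j hj

lemma not_cutvertex_of_unique {L : Finset (Sym2 V)}
    (hne : L.Nonempty) (hconn : EdgeConnected L) {x : V}
    (hx : ∀ e1 ∈ L, ∀ e2 ∈ L, x ∈ e1 → x ∈ e2 → e1 = e2) : ¬IsCutvertex L x := by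
  rintro ⟨hxc, hlt⟩
  have h1 : numCompsIn L (covered L) = 1 := numCompsIn_covered_eq_one hne hconn
  have h2 : numCompsIn L ((covered L).erase x) ≤ 1 := by
    apply numCompsIn_le_one
    intro i hi j hj
    obtain ⟨hix, hi'⟩ := Finset.mem_erase.mp hi
    obtain ⟨hjx, hj'⟩ := Finset.mem_erase.mp hj
    obtain ⟨w⟩ := hconn i hi' j hj'
    set p := w.toPath with hp
    have hxsup : x ∉ p.val.support := by
      intro hxs
      obtain ⟨f1, hf1, f2, hf2, hfne, hxf1, hxf2⟩ :=
        two_edges_at_internal p.val p.prop hxs (Ne.symm hix) (Ne.symm hjx)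
      have e1 := hx f1 (edge_mem_of_mem_edges hf1).1 f2 (edge_mem_of_mem_edges hf2).1 hxf1 hxf2
      exact hfne e1
    have hedges : ∀ e ∈ p.val.edges,
        e ∈ (Gr (L.filter fun e => ∀ y ∈ e, y ∈ (covered L).erase x)).edgeSet := by
      intro e he
      have h3 := edge_mem_of_mem_edges he
      rw [SimpleGraph.edgeSet_fromEdgeSet]
      refine ⟨?_, h3.2⟩
      rw [Finset.mem_coe, Finset.mem_filter]
      refine ⟨h3.1, fun y hy => ?_⟩
      have hysup : y ∈ p.val.support := mem_support_of_edge he hy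
      rcases support_cases p.val y hysup with rfl | hcov
      · exact hi
      · exact Finset.mem_erase.mpr ⟨by rintro rfl; exact hxsup hysup, hcov⟩
    exact ⟨p.val.transfer _ hedges⟩
  omega

lemma cutvertex_of_two {E L : Finset (Sym2 V)} (hE : SimpleEdges E)
    (hacyc : (Gr E).IsAcyclic) (hL : L ⊆ E) (hne : L.Nonempty) (hconn : EdgeConnected L)
    {x : V} {e1 e2 : Sym2 V} (he1 : e1 ∈ L) (he2 : e2 ∈ L) (hne12 : e1 ≠ e2)
    (hx1 : x ∈ e1) (hx2 : x ∈ e2) : IsCutvertex L x := by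
  obtain ⟨u, hu⟩ := Sym2.mem_iff_exists.mp hx1
  obtain ⟨w, hw⟩ := Sym2.mem_iff_exists.mp hx2
  have hxu : x ≠ u := by
    intro h
    exact hE e1 (hL he1) (by rw [hu, ← h]; exact Sym2.mk_isDiag_iff.mpr rfl)
  have hxw : x ≠ w := by
    intro h
    exact hE e2 (hL he2) (by rw [hw, ← h]; exact Sym2.mk_isDiag_iff.mpr rfl)
  have huw : u ≠ w := by
    intro h
    exact hne12 (by rw [hu, hw, h])
  refine ⟨covered_of_edge he1 hx1, ?_⟩
  rw [numCompsIn_covered_eq_one hne hconn]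
  set S := (covered L).erase x with hS
  have huS : u ∈ S := Finset.mem_erase.mpr
    ⟨Ne.symm hxu, covered_of_edge he1 (by rw [hu]; simp)⟩
  have hwS : w ∈ S := Finset.mem_erase.mpr
    ⟨Ne.symm hxw, covered_of_edge he2 (by rw [hw]; simp)⟩
  have hkey : compIn L S u ≠ compIn L S w := by
    intro hEq
    have hw_in : w ∈ compIn L S w :=
      Finset.mem_filter.mpr ⟨hwS, SimpleGraph.Reachable.refl w⟩
    rw [← hEq] at hw_in
    have hreach := (Finset.mem_filter.mp hw_in).2
    obtain ⟨wk⟩ := hreach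
    have hxsup : x ∉ wk.support := by
      intro hxs
      rcases support_cases wk x hxs with rfl | hcov
      · exact hxu rfl
      · obtain ⟨e, he, hxe⟩ := mem_covered'.mp hcov
        have := (Finset.mem_filter.mp he).2 x hxe
        exact (Finset.mem_erase.mp this).1 rfl
    have hedges : ∀ e ∈ wk.edges, e ∈ (Gr L).edgeSet := by
      intro e he
      have h3 := edge_mem_of_mem_edges he
      rw [SimpleGraph.edgeSet_fromEdgeSet]
      exact ⟨Finset.mem_coe.mpr (Finset.mem_filter.mp h3.1).1, h3.2⟩
    set p := (wk.transfer (Gr L) hedges).toPath with hp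
    have hxp : x ∉ p.val.support := by
      intro h
      apply hxsup
      have h2 := SimpleGraph.Walk.support_toPath_subset _ h
      rwa [SimpleGraph.Walk.support_transfer] at h2
    have hadj1 : (Gr L).Adj u x := gr_adj.mpr ⟨by rw [Sym2.eq_swap, ← hu]; exact he1, Ne.symm hxu⟩
    have hadj2 : (Gr L).Adj x w := gr_adj.mpr ⟨by rw [← hw]; exact he2, hxw⟩
    have hpath2 : (SimpleGraph.Walk.cons hadj1
        (SimpleGraph.Walk.cons hadj2 SimpleGraph.Walk.nil)).IsPath := by
      simp [SimpleGraph.Walk.isPath_def, huw, Ne.symm hxu, hxw]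
    have pu := SimpleGraph.isAcyclic_iff_path_unique.mp (acyclic_sub hL hacyc)
    have heqp := pu p ⟨_, hpath2⟩
    apply hxp
    rw [show p.val = SimpleGraph.Walk.cons hadj1
      (SimpleGraph.Walk.cons hadj2 SimpleGraph.Walk.nil) from congrArg Subtype.val heqp]
    simp
  have : 1 < (S.image (compIn L S)).card :=
    Finset.one_lt_card.mpr ⟨_, Finset.mem_image_of_mem _ huS, _,
      Finset.mem_image_of_mem _ hwS, hkey⟩
  exact this

lemma pend_unique {E L : Finset (Sym2 V)} (hE : SimpleEdges E)
    (hacyc : (Gr E).IsAcyclic) (hL : L ⊆ E) (hne : L.Nonempty) (hconn : EdgeConnected L)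
    {e : Sym2 V} (heL : e ∈ L) (hec : e ∉ cutedges L) :
    ∃ x ∈ e, ∀ e' ∈ L, x ∈ e' → e' = e := by
  rw [cutedges, Finset.mem_filter] at hec
  push_neg at hec
  obtain ⟨x, hxe, hncut⟩ := hec heL
  refine ⟨x, hxe, ?_⟩
  intro e' he' hxe'
  by_contra hne'
  exact hncut (cutvertex_of_two hE hacyc hL hne hconn he' heL hne' hxe' hxe)

end Aux3
section Aux4
set_option linter.unusedSectionVars false
set_option maxHeartbeats 1000000

open SimpleGraph Finset

variable {V : Type*} [Fintype V] [DecidableEq V]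

/-- `P` is (the edge set of) a connected component of the edge set `T`. -/
def IsCompOf (T P : Finset (Sym2 V)) : Prop :=
  P ⊆ T ∧ P.Nonempty ∧ EdgeConnected P ∧ ∀ e ∈ T, (∃ x ∈ e, x ∈ covered P) → e ∈ P

lemma mem_comp {T : Finset (Sym2 V)} {i j : V} :
    j ∈ comp T i ↔ (Gr T).Reachable i j := by
  simp [comp]

lemma closed_walk {T P : Finset (Sym2 V)}
    (hcl : ∀ e ∈ T, (∃ x ∈ e, x ∈ covered P) → e ∈ P)
    {a b : V} (p : (Gr T).Walk a b) (ha : a ∈ covered P) : b ∈ covered P := by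
  revert ha
  induction p with
  | nil => exact id
  | @cons a c b h q ih =>
    intro ha
    apply ih
    have he : s(a, c) ∈ T := (gr_adj.mp h).1
    have hP : s(a, c) ∈ P := hcl _ he ⟨a, by simp, ha⟩
    exact covered_of_edge hP (by simp)

lemma isCompOf_eq_filter {T P : Finset (Sym2 V)} (h : IsCompOf T P) :
    P = T.filter (fun e => ∃ x ∈ e, x ∈ covered P) := by
  apply Finset.Subset.antisymm
  · intro e he
    refine Finset.mem_filter.mpr ⟨h.1 he, ?_⟩
    obtain ⟨x, hx⟩ := exists_mem_sym2 e
    exact ⟨x, hx, covered_of_edge he hx⟩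
  · intro e he
    obtain ⟨heT, hex⟩ := Finset.mem_filter.mp he
    exact h.2.2.2 e heT hex

lemma comps_eq_image (T : Finset (Sym2 V)) :
    comps T = (T.powerset.filter (fun P => IsCompOf T P)).image covered := by
  classical
  ext C
  simp only [comps, Finset.mem_image]
  constructor
  · rintro ⟨i, hi, rfl⟩
    set P := T.filter (fun e => ∃ x ∈ e, (Gr T).Reachable i x) with hPdef
    have hPsub : P ⊆ T := Finset.filter_subset _ _
    have hcov : covered P = comp T i := by
      ext j
      rw [mem_covered', mem_comp]
      constructor
      · rintro ⟨e, he, hje⟩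
        obtain ⟨heT, x, hxe, hreach⟩ := Finset.mem_filter.mp he
        by_cases hxj : x = j
        · exact hxj ▸ hreach
        · have hexj : e = s(x, j) := by
            obtain ⟨y, hy⟩ := Sym2.mem_iff_exists.mp hxe
            subst hy
            rcases Sym2.mem_iff.mp hje with h | h
            · exact absurd h.symm hxj
            · rw [h]
          refine hreach.trans (SimpleGraph.Adj.reachable (gr_adj.mpr ⟨?_, hxj⟩))
          rwa [← hexj]
      · intro hreach
        by_cases hji : j = i
        · subst hji
          obtain ⟨e, he, hie⟩ := mem_covered'.mp hi
          exact ⟨e, Finset.mem_filter.mpr ⟨he, j, hie, SimpleGraph.Reachable.refl j⟩, hie⟩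
        · obtain ⟨wk⟩ := hreach
          obtain ⟨c, hjc, q, hq⟩ :=
            SimpleGraph.Walk.exists_eq_cons_of_ne hji wk.reverse
          refine ⟨s(j, c), Finset.mem_filter.mpr ⟨(gr_adj.mp hjc).1, j, by simp, ⟨wk⟩⟩, by simp⟩
    have key : ∀ (m : V) (w : (Gr T).Walk i m), ∀ e ∈ w.edges, e ∈ P := by
      intro m w e he
      obtain ⟨x, hx⟩ := exists_mem_sym2 e
      have hxs : x ∈ w.support := mem_support_of_edge he hx
      exact Finset.mem_filter.mpr ⟨(edge_mem_of_mem_edges he).1, x, hx, ⟨w.takeUntil x hxs⟩⟩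
    have hedgesP : ∀ (m : V) (w : (Gr T).Walk i m), ∀ e ∈ w.edges, e ∈ (Gr P).edgeSet := by
      intro m w e he
      rw [SimpleGraph.edgeSet_fromEdgeSet]
      exact ⟨Finset.mem_coe.mpr (key m w e he), (edge_mem_of_mem_edges he).2⟩
    refine ⟨P, ?_, hcov⟩
    rw [Finset.mem_filter, Finset.mem_powerset]
    refine ⟨hPsub, hPsub, ?_, ?_, ?_⟩
    · obtain ⟨e, he, hie⟩ := mem_covered'.mp hi
      exact ⟨e, Finset.mem_filter.mpr ⟨he, i, hie, SimpleGraph.Reachable.refl i⟩⟩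
    · intro j hj k hk
      rw [hcov, mem_comp] at hj hk
      obtain ⟨wj⟩ := hj
      obtain ⟨wk⟩ := hk
      have r1 : (Gr P).Reachable i j := ⟨wj.transfer _ (hedgesP j wj)⟩
      have r2 : (Gr P).Reachable i k := ⟨wk.transfer _ (hedgesP k wk)⟩
      exact r1.symm.trans r2
    · rintro e heT ⟨x, hxe, hxcov⟩
      rw [hcov, mem_comp] at hxcov
      exact Finset.mem_filter.mpr ⟨heT, x, hxe, hxcov⟩
  · rintro ⟨P, hP, rfl⟩
    obtain ⟨hPT', hsub, hne, hconn, hcl⟩ := Finset.mem_filter.mp hP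
    obtain ⟨i, hiP⟩ := covered_nonempty hne
    refine ⟨i, covered_mono hsub hiP, ?_⟩
    ext j
    rw [mem_comp]
    constructor
    · intro hreach
      obtain ⟨w⟩ := hreach
      exact closed_walk hcl w hiP
    · intro hj
      exact reachable_mono hsub (hconn i hiP j hj)

lemma linkGame_eq_sum {v : Finset V → ℝ} {f : ℕ → ℝ} (hsym : SymmetricGame v f)
    {E T : Finset (Sym2 V)} (hE : SimpleEdges E) (hacyc : (Gr E).IsAcyclic) (hT : T ⊆ E) :
    linkGame v T = ∑ P ∈ T.powerset.filter (fun P => IsCompOf T P), f (P.card + 1) := by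
  classical
  rw [linkGame, comps_eq_image, Finset.sum_image]
  · apply Finset.sum_congr rfl
    intro P hP
    obtain ⟨hPT, hcomp⟩ := Finset.mem_filter.mp hP
    rw [hsym (covered P),
      card_covered hE hacyc P ((Finset.mem_powerset.mp hPT).trans hT) hcomp.2.1 hcomp.2.2.1]
  · intro P1 h1 P2 h2 hcc
    have e1 := isCompOf_eq_filter (Finset.mem_filter.mp h1).2
    have e2 := isCompOf_eq_filter (Finset.mem_filter.mp h2).2
    rw [e1, hcc, ← e2]

end Aux4
section Aux5
set_option linter.unusedSectionVars false
set_option maxHeartbeats 1000000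

open SimpleGraph Finset

variable {V : Type*} [Fintype V] [DecidableEq V]

/-- The set of edges of `L` touching the vertex set covered by `P`. -/
def clOf (L P : Finset (Sym2 V)) : Finset (Sym2 V) :=
  L.filter (fun e => ∃ x ∈ e, x ∈ covered P)

lemma subset_clOf_self {L P : Finset (Sym2 V)} (hP : P ⊆ L) : P ⊆ clOf L P := by
  intro e he
  obtain ⟨x, hx⟩ := exists_mem_sym2 e
  exact Finset.mem_filter.mpr ⟨hP he, x, hx, covered_of_edge he hx⟩

lemma E1core {E L : Finset (Sym2 V)} (hE : SimpleEdges E)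
    (hacyc : (Gr E).IsAcyclic) (hL : L ⊆ E)
    {P : Finset (Sym2 V)} (hP : P ⊆ L) (hPconn : EdgeConnected P)
    (hLsub : L ⊆ clOf L P) {u w : V} (he : s(u, w) ∈ L) (heP : s(u, w) ∉ P)
    (hw : w ∉ covered P) : ∀ e' ∈ L, w ∈ e' → e' = s(u, w) := by
  classical
  have pu := SimpleGraph.isAcyclic_iff_path_unique.mp (acyclic_sub hL hacyc)
  have huw : u ≠ w := by
    intro h
    exact hE s(u, w) (hL he) (by rw [h]; exact Sym2.mk_isDiag_iff.mpr rfl)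
  have hucov : u ∈ covered P := by
    have h1 := hLsub he
    obtain ⟨x, hx, hxcov⟩ := (Finset.mem_filter.mp h1).2
    rcases Sym2.mem_iff.mp hx with rfl | rfl
    · exact hxcov
    · exact absurd hxcov hw
  intro e' he' hwe'
  by_contra hne'
  obtain ⟨z, hz⟩ := Sym2.mem_iff_exists.mp hwe'
  have hwz : w ≠ z := by
    intro h
    exact hE e' (hL he') (by rw [hz, h]; exact Sym2.mk_isDiag_iff.mpr rfl)
  have hzu : z ≠ u := by
    intro h
    exact hne' (by rw [hz, h, Sym2.eq_swap])
  have hzcov : z ∈ covered P := by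
    have h1 := hLsub he'
    obtain ⟨x, hx, hxcov⟩ := (Finset.mem_filter.mp h1).2
    rw [hz] at hx
    rcases Sym2.mem_iff.mp hx with rfl | rfl
    · exact absurd hxcov hw
    · exact hxcov
  obtain ⟨wk0⟩ := hPconn u hucov z hzcov
  set p := wk0.toPath with hpdef
  have hwp : w ∉ p.val.support := by
    intro hws
    rcases support_cases p.val w hws with rfl | hcov
    · exact hw hucov
    · exact hw hcov
  have hedges : ∀ e ∈ p.val.edges, e ∈ (Gr L).edgeSet := by
    intro e he2
    have h3 := edge_mem_of_mem_edges he2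
    rw [SimpleGraph.edgeSet_fromEdgeSet]
    exact ⟨Finset.mem_coe.mpr (hP h3.1), h3.2⟩
  set p1 := p.val.transfer (Gr L) hedges with hp1def
  have hp1 : p1.IsPath := p.prop.transfer hedges
  have hadj : (Gr L).Adj z w := gr_adj.mpr ⟨by rw [Sym2.eq_swap, ← hz]; exact he', Ne.symm hwz⟩
  have hp2 : (p1.concat hadj).IsPath := by
    apply isPath_concat hp1 hadj
    rw [hp1def, SimpleGraph.Walk.support_transfer]
    exact hwp
  have hadj0 : (Gr L).Adj u w := gr_adj.mpr ⟨he, huw⟩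
  have hsingle : (SimpleGraph.Walk.cons hadj0 SimpleGraph.Walk.nil).IsPath := by
    simp [SimpleGraph.Walk.isPath_def, huw]
  have heqp := pu ⟨p1.concat hadj, hp2⟩ ⟨SimpleGraph.Walk.cons hadj0 SimpleGraph.Walk.nil, hsingle⟩
  have hmem : s(u, w) ∈ (p1.concat hadj).edges := by
    rw [show p1.concat hadj = SimpleGraph.Walk.cons hadj0 SimpleGraph.Walk.nil from
      congrArg Subtype.val heqp]
    simp
  rw [SimpleGraph.Walk.edges_concat, List.concat_eq_append, List.mem_append] at hmem
  rcases hmem with hmem | hmem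
  · have : s(u, w) ∈ p.val.edges := by
      rwa [hp1def, SimpleGraph.Walk.edges_transfer] at hmem
    exact heP (edge_mem_of_mem_edges this).1
  · rw [List.mem_singleton] at hmem
    rcases Sym2.eq_iff.mp hmem with ⟨h1, -⟩ | ⟨h1, -⟩
    · exact hzu h1.symm
    · exact huw h1

lemma dominating_sdiff_subset {E L : Finset (Sym2 V)} (hE : SimpleEdges E)
    (hacyc : (Gr E).IsAcyclic) (hL : L ⊆ E) (hne : L.Nonempty) (hconn : EdgeConnected L)
    {P : Finset (Sym2 V)} (hP : P ⊆ L) (hPconn : EdgeConnected P)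
    (hLsub : L ⊆ clOf L P) : L \ P ⊆ L \ cutedges L := by
  classical
  have pu := SimpleGraph.isAcyclic_iff_path_unique.mp (acyclic_sub hL hacyc)
  intro e he
  obtain ⟨heL, heP⟩ := Finset.mem_sdiff.mp he
  rw [Finset.mem_sdiff]
  refine ⟨heL, ?_⟩
  clear he
  revert heL heP
  induction e using Sym2.ind with
  | _ u w =>
    intro heL heP hecut
    have hcut := (Finset.mem_filter.mp hecut).2
    have huw : u ≠ w := by
      intro h
      exact hE s(u, w) (hL heL) (by rw [h]; exact Sym2.mk_isDiag_iff.mpr rfl)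
    have hnb : u ∉ covered P ∨ w ∉ covered P := by
      by_contra hcon
      push_neg at hcon
      obtain ⟨hu, hw⟩ := hcon
      obtain ⟨wk0⟩ := hPconn u hu w hw
      set p := wk0.toPath with hpdef
      have hedges : ∀ e ∈ p.val.edges, e ∈ (Gr L).edgeSet := by
        intro e he2
        have h3 := edge_mem_of_mem_edges he2
        rw [SimpleGraph.edgeSet_fromEdgeSet]
        exact ⟨Finset.mem_coe.mpr (hP h3.1), h3.2⟩
      set p1 := p.val.transfer (Gr L) hedges with hp1def
      have hp1 : p1.IsPath := p.prop.transfer hedges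
      have hadj0 : (Gr L).Adj u w := gr_adj.mpr ⟨heL, huw⟩
      have hsingle : (SimpleGraph.Walk.cons hadj0 SimpleGraph.Walk.nil).IsPath := by
        simp [SimpleGraph.Walk.isPath_def, huw]
      have heqp := pu ⟨p1, hp1⟩ ⟨SimpleGraph.Walk.cons hadj0 SimpleGraph.Walk.nil, hsingle⟩
      have hmem : s(u, w) ∈ p1.edges := by
        rw [show p1 = SimpleGraph.Walk.cons hadj0 SimpleGraph.Walk.nil from
          congrArg Subtype.val heqp]
        simp
      rw [hp1def, SimpleGraph.Walk.edges_transfer] at hmem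
      exact heP (edge_mem_of_mem_edges hmem).1
    rcases hnb with hu | hw
    · have huniq := E1core hE hacyc hL hP hPconn hLsub
        (by rwa [Sym2.eq_swap]) (by rwa [Sym2.eq_swap]) hu
      exact not_cutvertex_of_unique hne hconn
        (fun e1 h1 e2 h2 hx1 hx2 => by rw [huniq e1 h1 hx1, huniq e2 h2 hx2])
        (hcut u (by simp))
    · have huniq := E1core hE hacyc hL hP hPconn hLsub heL heP hw
      exact not_cutvertex_of_unique hne hconn
        (fun e1 h1 e2 h2 hx1 hx2 => by rw [huniq e1 h1 hx1, huniq e2 h2 hx2])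
        (hcut w (by simp))

lemma pendant_complement {E L : Finset (Sym2 V)} (hE : SimpleEdges E)
    (hacyc : (Gr E).IsAcyclic) (hL : L ⊆ E) (hne : L.Nonempty) (hconn : EdgeConnected L)
    {K : Finset (Sym2 V)} (hK : K ⊆ L \ cutedges L) (hKneL : K ≠ L) :
    (L \ K).Nonempty ∧ EdgeConnected (L \ K) ∧ L ⊆ clOf L (L \ K) := by
  classical
  have hKL : K ⊆ L := hK.trans (Finset.sdiff_subset)
  have hne' : (L \ K).Nonempty := by
    rw [Finset.sdiff_nonempty]
    intro hsub
    exact hKneL (Finset.Subset.antisymm hKL hsub)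
  have pend : ∀ e ∈ K, ∃ x ∈ e, ∀ e' ∈ L, x ∈ e' → e' = e := by
    intro e he
    exact pend_unique hE hacyc hL hne hconn (hKL he) ((Finset.mem_sdiff.mp (hK he)).2)
  have hconn' : EdgeConnected (L \ K) := by
    intro i hi j hj
    have hi' : i ∈ covered L := covered_mono Finset.sdiff_subset hi
    have hj' : j ∈ covered L := covered_mono Finset.sdiff_subset hj
    obtain ⟨wk0⟩ := hconn i hi' j hj'
    set p := wk0.toPath with hpdef
    have hedges : ∀ e ∈ p.val.edges, e ∈ (Gr (L \ K)).edgeSet := by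
      intro e he
      have h3 := edge_mem_of_mem_edges he
      rw [SimpleGraph.edgeSet_fromEdgeSet]
      refine ⟨Finset.mem_coe.mpr (Finset.mem_sdiff.mpr ⟨h3.1, ?_⟩), h3.2⟩
      intro heK
      obtain ⟨x, hxe, huniq⟩ := pend e heK
      have hxs : x ∈ p.val.support := mem_support_of_edge he hxe
      by_cases hxi : x = i
      · subst hxi
        obtain ⟨e'', he'', hxe''⟩ := mem_covered'.mp hi
        obtain ⟨he''L, he''K⟩ := Finset.mem_sdiff.mp he''
        have hq : e'' = e := huniq e'' he''L hxe''
        exact he''K (by rw [hq]; exact heK)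
      · by_cases hxj : x = j
        · subst hxj
          obtain ⟨e'', he'', hxe''⟩ := mem_covered'.mp hj
          obtain ⟨he''L, he''K⟩ := Finset.mem_sdiff.mp he''
          have hq : e'' = e := huniq e'' he''L hxe''
          exact he''K (by rw [hq]; exact heK)
        · obtain ⟨f1, hf1, f2, hf2, hfne, hxf1, hxf2⟩ :=
            two_edges_at_internal p.val p.prop hxs hxi hxj
          have q1 := huniq f1 (edge_mem_of_mem_edges hf1).1 hxf1
          have q2 := huniq f2 (edge_mem_of_mem_edges hf2).1 hxf2
          exact hfne (by grind)
    exact ⟨p.val.transfer _ hedges⟩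
  refine ⟨hne', hconn', ?_⟩
  intro e heL
  refine Finset.mem_filter.mpr ⟨heL, ?_⟩
  by_cases heK : e ∈ K
  · obtain ⟨x, hxe, huniq⟩ := pend e heK
    obtain ⟨u, hu⟩ := Sym2.mem_iff_exists.mp hxe
    have hxu : x ≠ u := by
      intro h
      exact hE e (hL heL) (by rw [hu, ← h]; exact Sym2.mk_isDiag_iff.mpr rfl)
    refine ⟨u, by rw [hu]; simp, ?_⟩
    by_contra hucov
    have hallK : ∀ e'' ∈ L, u ∈ e'' → e'' ∈ K := by
      intro e'' h1 h2
      by_contra h3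
      exact hucov (mem_covered'.mpr ⟨e'', Finset.mem_sdiff.mpr ⟨h1, h3⟩, h2⟩)
    obtain ⟨e₀, he₀⟩ := hne'
    obtain ⟨he₀L, he₀K⟩ := Finset.mem_sdiff.mp he₀
    have hue₀ : u ∉ e₀ := fun h => he₀K (hallK e₀ he₀L h)
    obtain ⟨w₀, hw₀⟩ := exists_mem_sym2 e₀
    have hw₀u : w₀ ≠ u := fun h => hue₀ (h ▸ hw₀)
    have hw₀cov : w₀ ∈ covered L := covered_of_edge he₀L hw₀
    have hucovL : u ∈ covered L := covered_of_edge heL (by rw [hu]; simp)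
    obtain ⟨wk0⟩ := hconn w₀ hw₀cov u hucovL
    set p := wk0.toPath with hpdef
    obtain ⟨c, huc, q, hq⟩ :=
      SimpleGraph.Walk.exists_eq_cons_of_ne (Ne.symm hw₀u) p.val.reverse
    have he_lL : s(u, c) ∈ L := (gr_adj.mp huc).1
    have he_lK : s(u, c) ∈ K := hallK _ he_lL (by simp)
    obtain ⟨y, hye, hyuniq⟩ := pend s(u, c) he_lK
    have hcsup : c ∈ p.val.support := by
      have h1 : c ∈ p.val.reverse.support := by
        rw [hq, SimpleGraph.Walk.support_cons]
        exact List.mem_cons_of_mem _ (SimpleGraph.Walk.start_mem_support q)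
      rwa [SimpleGraph.Walk.support_reverse, List.mem_reverse] at h1
    have hcu : c ≠ u := Ne.symm (gr_adj.mp huc).2
    rcases Sym2.mem_iff.mp hye with hyu | hyc
    · -- y = u : the unique edge at u is s(u,c); then e = s(u,c), hence c = x
      have hyuniqU : ∀ e' ∈ L, u ∈ e' → e' = s(u, c) := fun e' he' hce =>
        hyuniq e' he' (by rw [hyu]; exact hce)
      have he_eq : e = s(u, c) := hyuniqU e heL (by rw [hu]; simp)
      have hcx : c = x := by
        rw [hu] at he_eq
        rcases Sym2.eq_iff.mp he_eq with ⟨h1, h2⟩ | ⟨h1, h2⟩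
        · exact absurd h1 hxu
        · exact h1.symm
      rw [hcx] at hcsup
      by_cases hxw₀ : x = w₀
      · have hx0 : x ∈ e₀ := by rw [hxw₀]; exact hw₀
        have he₀e : e₀ = e := huniq e₀ he₀L hx0
        exact he₀K (by rw [he₀e]; exact heK)
      · have hxu' : x ≠ u := hxu
        obtain ⟨f1, hf1, f2, hf2, hfne, hxf1, hxf2⟩ :=
          two_edges_at_internal p.val p.prop hcsup hxw₀ hxu'
        have q1 := huniq f1 (edge_mem_of_mem_edges hf1).1 hxf1
        have q2 := huniq f2 (edge_mem_of_mem_edges hf2).1 hxf2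
        exact hfne (q1.trans q2.symm)
    · -- y = c : the unique edge at c is s(u,c)
      have hyuniqC : ∀ e' ∈ L, c ∈ e' → e' = s(u, c) := fun e' he' hce =>
        hyuniq e' he' (by rw [hyc]; exact hce)
      by_cases hcw₀ : c = w₀
      · have he₀e : e₀ = s(u, c) := hyuniqC e₀ he₀L (by rw [hcw₀]; exact hw₀)
        exact he₀K (by rw [he₀e]; exact he_lK)
      · obtain ⟨f1, hf1, f2, hf2, hfne, hxf1, hxf2⟩ :=
          two_edges_at_internal p.val p.prop hcsup hcw₀ hcu
        have q1 := hyuniqC f1 (edge_mem_of_mem_edges hf1).1 hxf1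
        have q2 := hyuniqC f2 (edge_mem_of_mem_edges hf2).1 hxf2
        exact hfne (q1.trans q2.symm)
  · obtain ⟨x, hx⟩ := exists_mem_sym2 e
    exact ⟨x, hx, mem_covered'.mpr ⟨e, Finset.mem_sdiff.mpr ⟨heL, heK⟩, hx⟩⟩

end Aux5
section Aux6
set_option linter.unusedSectionVars false
set_option maxHeartbeats 1000000

open Finset

lemma neg_one_pow_sub_eq {n k : ℕ} (h : k ≤ n) : (-1 : ℝ) ^ (n - k) = (-1) ^ n * (-1) ^ k := by
  have h1 : n - k + k = n := Nat.sub_add_cancel h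
  conv_rhs => rw [← h1, pow_add]
  rw [mul_assoc, ← mul_pow]
  norm_num

lemma sum_powerset_neg_one_real {α : Type*} [DecidableEq α] (s : Finset α) :
    ∑ t ∈ s.powerset, (-1 : ℝ) ^ t.card = if s = ∅ then 1 else 0 := by
  have h := Finset.sum_powerset_neg_one_pow_card (x := s)
  have h2 : ((∑ m ∈ s.powerset, (-1 : ℤ) ^ m.card : ℤ) : ℝ)
      = ∑ t ∈ s.powerset, (-1 : ℝ) ^ t.card := by
    push_cast
    rfl
  rw [← h2, h]
  split <;> simp

end Aux6
/-- in a cycle-free graph, the Harsanyi dividend of a nonempty connected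
edge set `L` equals `F(l+1, l - d_L) = ∑_{k=0}^{l-d_L} (-1)^k C(l-d_L,k) f(l+1-k)`. -/
theorem dividend_cycle_free (v : Finset V → ℝ) (f : ℕ → ℝ)
    (hsym : SymmetricGame v f) (hzn : ZeroNormalized v)
    (E : Finset (Sym2 V)) (hE : SimpleEdges E)
    (hacyc : (SimpleGraph.fromEdgeSet (↑E : Set (Sym2 V))).IsAcyclic)
    (L : Finset (Sym2 V)) (hL : L ⊆ E) (hne : L.Nonempty) (hconn : EdgeConnected L) :
    dividend (linkGame v) L =
      ∑ k ∈ Finset.range (L.card - (cutedges L).card + 1),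
        (-1 : ℝ) ^ k * ((L.card - (cutedges L).card).choose k : ℝ) *
          f (L.card + 1 - k) := by
  classical
  have hacyc' : (Gr E).IsAcyclic := hacyc
  -- f 1 = 0
  have hf1 : f 1 = 0 := by
    obtain ⟨e₀', he₀'⟩ := hne
    obtain ⟨i₀, hi₀⟩ := exists_mem_sym2 e₀'
    have h1 := hsym {i₀}
    rw [Finset.card_singleton] at h1
    rw [← h1]
    exact hzn.2 i₀
  set D := L.powerset.filter (fun P => P.Nonempty ∧ EdgeConnected P) with hD
  -- Step 1: expand the dividend through connected components
  have hstep1 : dividend (linkGame v) L =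
      ∑ x ∈ L.powerset.sigma (fun T => T.powerset.filter (fun P => IsCompOf T P)),
        (-1 : ℝ) ^ (L.card - x.1.card) * f (x.2.card + 1) := by
    rw [dividend, Finset.sum_sigma]
    apply Finset.sum_congr rfl
    intro T hT
    rw [linkGame_eq_sum hsym hE hacyc' ((Finset.mem_powerset.mp hT).trans hL), Finset.mul_sum]
  -- Step 2: reindex pairs (T, component P of T) as (P, extra edges S away from P)
  have hstep2 : ∑ x ∈ L.powerset.sigma (fun T => T.powerset.filter (fun P => IsCompOf T P)),
        (-1 : ℝ) ^ (L.card - x.1.card) * f (x.2.card + 1)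
      = ∑ y ∈ D.sigma (fun P => (L \ clOf L P).powerset),
        (-1 : ℝ) ^ (L.card - (y.1.card + y.2.card)) * f (y.1.card + 1) := by
    apply Finset.sum_nbij'
      (i := fun x : (_ : Finset (Sym2 V)) × Finset (Sym2 V) => ⟨x.2, x.1 \ x.2⟩)
      (j := fun y : (_ : Finset (Sym2 V)) × Finset (Sym2 V) => ⟨y.1 ∪ y.2, y.1⟩)
    · rintro ⟨T, P⟩ hx
      rw [Finset.mem_sigma] at hx ⊢
      obtain ⟨hT, hP⟩ := hx
      have hTL : T ⊆ L := Finset.mem_powerset.mp hT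
      obtain ⟨hPT', hsub, hPne, hPconn, hclP⟩ := Finset.mem_filter.mp hP
      constructor
      · rw [hD, Finset.mem_filter, Finset.mem_powerset]
        exact ⟨hsub.trans hTL, hPne, hPconn⟩
      · rw [Finset.mem_powerset]
        intro e he
        rw [Finset.mem_sdiff] at he ⊢
        refine ⟨hTL he.1, ?_⟩
        intro hecl
        obtain ⟨-, hx, hxe, hxcov⟩ := Finset.mem_filter.mp hecl
        exact he.2 (hclP e he.1 ⟨hx, hxe, hxcov⟩)
    · rintro ⟨P, S⟩ hy
      rw [Finset.mem_sigma] at hy ⊢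
      obtain ⟨hP, hS⟩ := hy
      obtain ⟨hPL', hPne, hPconn⟩ := Finset.mem_filter.mp hP
      have hPL : P ⊆ L := Finset.mem_powerset.mp hPL'
      have hSsub : S ⊆ L \ clOf L P := Finset.mem_powerset.mp hS
      constructor
      · rw [Finset.mem_powerset]
        exact Finset.union_subset hPL (hSsub.trans Finset.sdiff_subset)
      · rw [Finset.mem_filter, Finset.mem_powerset]
        refine ⟨Finset.subset_union_left, Finset.subset_union_left, hPne, hPconn, ?_⟩
        rintro e heT ⟨x, hxe, hxcov⟩
        rcases Finset.mem_union.mp heT with h | h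
        · exact h
        · exfalso
          have := Finset.mem_sdiff.mp (hSsub h)
          exact this.2 (Finset.mem_filter.mpr ⟨this.1, x, hxe, hxcov⟩)
    · rintro ⟨T, P⟩ hx
      rw [Finset.mem_sigma] at hx
      have hPT : P ⊆ T := (Finset.mem_filter.mp hx.2).2.1
      have h1 : P ∪ T \ P = T := Finset.union_sdiff_of_subset hPT
      exact congrArg (fun A => (⟨A, P⟩ : (_ : Finset (Sym2 V)) × Finset (Sym2 V))) h1
    · rintro ⟨P, S⟩ hy
      rw [Finset.mem_sigma] at hy
      obtain ⟨hP, hS⟩ := hy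
      obtain ⟨hPL', hPne, hPconn⟩ := Finset.mem_filter.mp hP
      have hPL : P ⊆ L := Finset.mem_powerset.mp hPL'
      have hSsub : S ⊆ L \ clOf L P := Finset.mem_powerset.mp hS
      have hdisj : Disjoint P S := Finset.disjoint_left.mpr
        (fun e heP heS => (Finset.mem_sdiff.mp (hSsub heS)).2 (subset_clOf_self hPL heP))
      have h1 : (P ∪ S) \ P = S := Finset.union_sdiff_cancel_left hdisj
      exact congrArg (fun B => (⟨P, B⟩ : (_ : Finset (Sym2 V)) × Finset (Sym2 V))) h1
    · rintro ⟨T, P⟩ hx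
      rw [Finset.mem_sigma] at hx
      have hPT : P ⊆ T := (Finset.mem_filter.mp hx.2).2.1
      have h1 : (T \ P).card + P.card = T.card := Finset.card_sdiff_add_card_eq_card hPT
      have h2 : P.card + (T \ P).card = T.card := by omega
      rw [h2]
  -- Step 3: sum the inner alternating sum; only dominating P survive
  have hstep3 : ∑ y ∈ D.sigma (fun P => (L \ clOf L P).powerset),
        (-1 : ℝ) ^ (L.card - (y.1.card + y.2.card)) * f (y.1.card + 1)
      = ∑ P ∈ D.filter (fun P => L \ clOf L P = ∅),
          (-1 : ℝ) ^ L.card * (-1) ^ P.card * f (P.card + 1) := by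
    rw [Finset.sum_sigma]
    have inner : ∀ P ∈ D, ∑ S ∈ (L \ clOf L P).powerset,
        (-1 : ℝ) ^ (L.card - (P.card + S.card)) * f (P.card + 1)
        = if L \ clOf L P = ∅ then (-1 : ℝ) ^ L.card * (-1) ^ P.card * f (P.card + 1)
          else 0 := by
      intro P hP
      obtain ⟨hPL', hPne, hPconn⟩ := Finset.mem_filter.mp hP
      have hPL : P ⊆ L := Finset.mem_powerset.mp hPL'
      have htrans : ∀ S ∈ (L \ clOf L P).powerset,
          (-1 : ℝ) ^ (L.card - (P.card + S.card)) * f (P.card + 1)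
          = ((-1 : ℝ) ^ L.card * (-1) ^ P.card * f (P.card + 1)) * (-1) ^ S.card := by
        intro S hS
        have hSsub : S ⊆ L \ clOf L P := Finset.mem_powerset.mp hS
        have hdisj : Disjoint P S := Finset.disjoint_left.mpr
          (fun e heP heS => (Finset.mem_sdiff.mp (hSsub heS)).2 (subset_clOf_self hPL heP))
        have hle : P.card + S.card ≤ L.card := by
          rw [← Finset.card_union_of_disjoint hdisj]
          exact Finset.card_le_card (Finset.union_subset hPL (hSsub.trans Finset.sdiff_subset))
        rw [neg_one_pow_sub_eq hle, pow_add]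
        ring
      rw [Finset.sum_congr rfl htrans, ← Finset.mul_sum, sum_powerset_neg_one_real]
      split
      · rw [mul_one]
      · rw [mul_zero]
    rw [Finset.sum_congr rfl inner, ← Finset.sum_filter]
  -- Step 4: dominating connected P ↔ complements of proper pendant-edge sets K
  have hstep4 : ∑ P ∈ D.filter (fun P => L \ clOf L P = ∅),
          (-1 : ℝ) ^ L.card * (-1) ^ P.card * f (P.card + 1)
      = ∑ K ∈ (L \ cutedges L).powerset.filter (fun K => K ≠ L),
          (-1 : ℝ) ^ K.card * f (L.card + 1 - K.card) := by
    apply Finset.sum_nbij' (i := fun P => L \ P) (j := fun K => L \ K)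
    · intro P hP
      obtain ⟨hPD, hdom⟩ := Finset.mem_filter.mp hP
      obtain ⟨hPL', hPne, hPconn⟩ := Finset.mem_filter.mp hPD
      have hPL : P ⊆ L := Finset.mem_powerset.mp hPL'
      have hLsub : L ⊆ clOf L P := by
        rw [← Finset.sdiff_eq_empty_iff_subset]
        exact hdom
      rw [Finset.mem_filter, Finset.mem_powerset]
      constructor
      · exact dominating_sdiff_subset hE hacyc' hL hne hconn hPL hPconn hLsub
      · intro h
        obtain ⟨e, he⟩ := hPne
        have : e ∈ L \ P := by rw [h]; exact hPL he
        exact (Finset.mem_sdiff.mp this).2 he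
    · intro K hK
      obtain ⟨hKp, hKne⟩ := Finset.mem_filter.mp hK
      have hKP : K ⊆ L \ cutedges L := Finset.mem_powerset.mp hKp
      obtain ⟨hne', hconn', hcl'⟩ := pendant_complement hE hacyc' hL hne hconn hKP hKne
      rw [Finset.mem_filter, hD, Finset.mem_filter, Finset.mem_powerset]
      exact ⟨⟨Finset.sdiff_subset, hne', hconn'⟩, Finset.sdiff_eq_empty_iff_subset.mpr hcl'⟩
    · intro P hP
      obtain ⟨hPD, -⟩ := Finset.mem_filter.mp hP
      obtain ⟨hPL', -, -⟩ := Finset.mem_filter.mp hPD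
      exact Finset.sdiff_sdiff_eq_self (Finset.mem_powerset.mp hPL')
    · intro K hK
      obtain ⟨hKp, -⟩ := Finset.mem_filter.mp hK
      have hKL : K ⊆ L := (Finset.mem_powerset.mp hKp).trans Finset.sdiff_subset
      exact Finset.sdiff_sdiff_eq_self hKL
    · intro P hP
      obtain ⟨hPD, -⟩ := Finset.mem_filter.mp hP
      obtain ⟨hPL', -, -⟩ := Finset.mem_filter.mp hPD
      have hPL : P ⊆ L := Finset.mem_powerset.mp hPL'
      have hPle : P.card ≤ L.card := Finset.card_le_card hPL
      have hc : (L \ P).card = L.card - P.card := Finset.card_sdiff_of_subset hPL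
      have hf : L.card + 1 - (L.card - P.card) = P.card + 1 := by omega
      rw [hc, hf, neg_one_pow_sub_eq hPle]
  -- Step 5: the excluded term K = L contributes 0
  have hstep5 : ∑ K ∈ (L \ cutedges L).powerset.filter (fun K => K ≠ L),
          (-1 : ℝ) ^ K.card * f (L.card + 1 - K.card)
      = ∑ K ∈ (L \ cutedges L).powerset,
          (-1 : ℝ) ^ K.card * f (L.card + 1 - K.card) := by
    rw [← Finset.sum_filter_add_sum_filter_not ((L \ cutedges L).powerset)
      (fun K => K ≠ L) (fun K => (-1 : ℝ) ^ K.card * f (L.card + 1 - K.card))]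
    have hz : ∑ K ∈ (L \ cutedges L).powerset.filter (fun K => ¬K ≠ L),
        (-1 : ℝ) ^ K.card * f (L.card + 1 - K.card) = 0 := by
      apply Finset.sum_eq_zero
      intro K hK
      obtain ⟨-, hKL⟩ := Finset.mem_filter.mp hK
      push_neg at hKL
      have h1 : L.card + 1 - K.card = 1 := by rw [hKL]; omega
      rw [h1, hf1, mul_zero]
    rw [hz, add_zero]
  -- Step 6: collect by cardinality
  have hstep6 : ∑ K ∈ (L \ cutedges L).powerset,
          (-1 : ℝ) ^ K.card * f (L.card + 1 - K.card)
      = ∑ k ∈ Finset.range ((L \ cutedges L).card + 1),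
          (-1 : ℝ) ^ k * (((L \ cutedges L).card).choose k : ℝ) * f (L.card + 1 - k) := by
    rw [Finset.sum_powerset_apply_card (f := fun k => (-1 : ℝ) ^ k * f (L.card + 1 - k))]
    apply Finset.sum_congr rfl
    intro k hk
    rw [nsmul_eq_mul]
    ring
  have hPendcard : (L \ cutedges L).card = L.card - (cutedges L).card :=
    Finset.card_sdiff_of_subset (Finset.filter_subset _ _)
  rw [hstep1, hstep2, hstep3, hstep4, hstep5, hstep6, hPendcard]

end
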